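/- arXiv:1709.04104 — 2 statements merged into one kernel-verified Lean document; each statement's English description precedes it below -/
import Mathlib

section
/- For all real numbers N ≥ 1, the partial sum U_N = ∑_{n=1}^{N} u_n satisfies U_N ∈ {-2, -1, 0} and U_N ≡ N (mod 2). -/
open Filter Finset Topology

/-- The Thue–Morse sequence with values `±1`: `u n = (-1)^(s₂ n)` where `s₂ n`
is the sum of the binary digits of `n`. -/
def u (n : ℕ) : ℤ := (-1) ^ (Nat.digits 2 n).sum

/-! Since `u (2k) = u k` and `u (2k+1) = -u k`, the sequence sums to zero over every block
`{2k, 2k+1}`. Hence `∑_{n<2m} u n = 0` and `∑_{n≤2m} u n = u m`, so `U_N = -1` for odd `N`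
and `U_N = u (N/2) - 1 ∈ {0, -2}` for even `N`, the `-1` accounting for `u 0 = 1`. -/

lemma u_zero : u 0 = 1 := rfl

lemma u_two_mul (k : ℕ) : u (2 * k) = u k := by
  rcases Nat.eq_zero_or_pos k with rfl | hk
  · rfl
  · rw [u, Nat.digits_def' one_lt_two (by omega), Nat.mul_mod_right,
      Nat.mul_div_cancel_left k two_pos]
    simp [u]

lemma u_two_mul_add_one (k : ℕ) : u (2 * k + 1) = -u k := by
  rw [u, Nat.digits_def' one_lt_two (by omega), Nat.mul_add_mod_self_left,
    Nat.mul_add_div two_pos]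
  simp [u, pow_add]

lemma u_eq_one_or_neg_one (k : ℕ) : u k = 1 ∨ u k = -1 :=
  neg_one_pow_eq_or ℤ _

lemma sum_range_two_mul_u (m : ℕ) : ∑ n ∈ range (2 * m), u n = 0 := by
  induction m with
  | zero => rfl
  | succ m ih =>
    rw [Nat.mul_succ, sum_range_succ, sum_range_succ, ih, u_two_mul, u_two_mul_add_one]
    ring

lemma sum_Icc_one_u_eq_sum_range_sub_one (N : ℕ) :
    ∑ n ∈ Icc 1 N, u n = ∑ n ∈ range (N + 1), u n - 1 := by
  rw [range_eq_Ico, sum_eq_sum_Ico_succ_bot N.add_one_pos, zero_add, Ico_add_one_right_eq_Icc,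
    u_zero]
  ring

theorem stmt_3_general (N : ℕ) :
    (∑ n ∈ Finset.Icc 1 N, u n) ∈ ({-2, -1, 0} : Set ℤ) ∧
      (∑ n ∈ Finset.Icc 1 N, u n) ≡ (N : ℤ) [ZMOD 2] := by
  rw [sum_Icc_one_u_eq_sum_range_sub_one]
  obtain ⟨m, rfl | rfl⟩ := Nat.even_or_odd' N
  · rw [sum_range_succ, sum_range_two_mul_u, u_two_mul, zero_add]
    rcases u_eq_one_or_neg_one m with h | h <;> rw [h] <;> refine ⟨by simp, ?_⟩ <;>
      simp [Int.ModEq]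
  · rw [show 2 * m + 1 + 1 = 2 * (m + 1) by ring, sum_range_two_mul_u]
    refine ⟨by simp, ?_⟩
    simp [Int.ModEq]

/-- For every `N ≥ 1`, the partial sum `U_N = ∑_{n=1}^{N} u_n` lies in
`{-2, -1, 0}` and satisfies `U_N ≡ N (mod 2)`. -/
theorem stmt_3 (N : ℕ) (hN : 1 ≤ N) :
    (∑ n ∈ Finset.Icc 1 N, u n) ∈ ({-2, -1, 0} : Set ℤ) ∧
      (∑ n ∈ Finset.Icc 1 N, u n) ≡ (N : ℤ) [ZMOD 2] :=
  stmt_3_general N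
end

section
/- The function h is infinitely differentiable (C^∞) on the open interval (-2, ∞). -/
open Filter Finset Topology

lemma u_cases (n : ℕ) : u n = 1 ∨ u n = -1 := by
  rcases Nat.even_or_odd ((Nat.digits 2 n).sum) with h | h
  · exact Or.inl (h.neg_one_pow)
  · exact Or.inr (h.neg_one_pow)

lemma u_abs (n : ℕ) : |(u n : ℝ)| = 1 := by
  rcases u_cases n with h | h <;> rw [h] <;> norm_num

lemma u_one : u 1 = -1 := by
  have : Nat.digits 2 1 = [1] := by simp
  rw [u, this]; norm_num

lemma u_even (m : ℕ) : u (2 * m + 2) = u (m + 1) := by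
  rw [u, u, Nat.digits_def' (by norm_num : 1 < 2) (by omega)]
  have h1 : (2 * m + 2) % 2 = 0 := by omega
  have h2 : (2 * m + 2) / 2 = m + 1 := by omega
  rw [h1, h2, List.sum_cons]
  ring_nf

lemma u_odd (m : ℕ) : u (2 * m + 3) = - u (m + 1) := by
  rw [u, u, Nat.digits_def' (by norm_num : 1 < 2) (by omega)]
  have h1 : (2 * m + 3) % 2 = 1 := by omega
  have h2 : (2 * m + 3) / 2 = m + 1 := by omega
  rw [h1, h2, List.sum_cons, pow_add]
  ring_nf

noncomputable def g0 (z : ℂ) : ℂ := Complex.log z - Complex.log (z + 2)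

lemma slit_of_re {z : ℂ} (hz : 0 < z.re) : z ∈ Complex.slitPlane :=
  Complex.mem_slitPlane_iff.mpr (Or.inl hz)

lemma g0_hasDerivAt {z : ℂ} (hz : 0 < z.re) : HasDerivAt g0 (z⁻¹ - (z + 2)⁻¹) z := by
  have h1 : HasDerivAt Complex.log z⁻¹ z := Complex.hasDerivAt_log (slit_of_re hz)
  have h2 : HasDerivAt (fun w : ℂ => Complex.log (w + 2)) ((z + 2)⁻¹) z := by
    have hz2 : (0:ℝ) < (z + 2).re := by simp [Complex.add_re]; linarith
    have := (Complex.hasDerivAt_log (slit_of_re hz2)).comp z ((hasDerivAt_id z).add_const 2)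
    rw [mul_one] at this
    exact this
  exact h1.sub h2

lemma norm_g0_sub {r : ℝ} (hr : 0 < r) {a b : ℂ} (ha : r ≤ a.re) (hb : r ≤ b.re) :
    ‖g0 b - g0 a‖ ≤ 2 / r ^ 2 * ‖b - a‖ := by
  set S : Set ℂ := {w : ℂ | r ≤ w.re} with hS
  have hconv : Convex ℝ S := convex_halfSpace_re_ge r
  have hderiv : ∀ w ∈ S, HasDerivWithinAt g0 (w⁻¹ - (w + 2)⁻¹) S w := fun w hw =>
    (g0_hasDerivAt (lt_of_lt_of_le hr hw)).hasDerivWithinAt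
  have hbound : ∀ w ∈ S, ‖w⁻¹ - (w + 2)⁻¹‖ ≤ 2 / r ^ 2 := by
    intro w hw
    have hwre : r ≤ w.re := hw
    have hw0 : w ≠ 0 := by
      intro h; rw [h] at hwre; simp at hwre; linarith
    have hw2re : r ≤ (w + 2).re := by simp [Complex.add_re]; linarith
    have hw20 : (w + 2) ≠ 0 := by
      intro h; rw [h] at hw2re; simp at hw2re; linarith
    have key : w⁻¹ - (w + 2)⁻¹ = 2 / (w * (w + 2)) := by field_simp; ring
    rw [key]
    have hnw : r ≤ ‖w‖ := le_trans hwre (Complex.re_le_norm w)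
    have hnw2 : r ≤ ‖w + 2‖ := le_trans hw2re (Complex.re_le_norm _)
    rw [norm_div, norm_mul]
    have h2 : ‖(2:ℂ)‖ = 2 := by norm_num
    rw [h2]
    have : r ^ 2 ≤ ‖w‖ * ‖w + 2‖ := by
      rw [sq]; exact mul_le_mul hnw hnw2 (le_of_lt hr) (le_trans (le_of_lt hr) hnw)
    exact div_le_div_of_nonneg_left (by norm_num) (by positivity) this
  have ha' : a ∈ S := ha
  have hb' : b ∈ S := hb
  exact hconv.norm_image_sub_le_of_norm_hasDerivWithin_le hderiv hbound ha' hb'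

noncomputable def Pc (m : ℕ) (z : ℂ) : ℂ :=
  (u (m + 1) : ℂ) * (g0 (z + (4 * m + 4)) - g0 (z + (4 * m + 5)))

noncomputable def bnd (m : ℕ) : ℝ := ((m : ℝ) + 1)⁻¹ ^ 2

lemma summable_bnd : Summable bnd := by
  have h : Summable (fun n : ℕ => 1 / (n : ℝ) ^ 2) := Real.summable_one_div_nat_pow.mpr one_lt_two
  have h2 := (_root_.summable_nat_add_iff 1).mpr h
  apply h2.congr
  intro m
  rw [bnd, inv_pow]
  push_cast
  norm_num

lemma u_norm_c (n : ℕ) : ‖(u n : ℂ)‖ = 1 := by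
  rcases u_cases n with h | h <;> rw [h] <;> norm_num

lemma norm_Pc {m : ℕ} {z : ℂ} (hz : -2 < z.re) : ‖Pc m z‖ ≤ bnd m := by
  have hm : (0:ℝ) ≤ m := Nat.cast_nonneg m
  have hr : (0:ℝ) < 2 * ((m : ℝ) + 1) := by linarith
  have ha : 2 * ((m : ℝ) + 1) ≤ (z + (4 * m + 4)).re := by
    simp [Complex.add_re]; linarith
  have hb : 2 * ((m : ℝ) + 1) ≤ (z + (4 * m + 5)).re := by
    simp [Complex.add_re]; linarith
  have key := norm_g0_sub hr hb ha
  have hdiff : (z + (4 * m + 4)) - (z + (4 * m + 5)) = -1 := by ring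
  rw [hdiff] at key
  have hnorm1 : ‖(-1 : ℂ)‖ = 1 := by norm_num
  rw [hnorm1, mul_one] at key
  calc ‖Pc m z‖ = ‖g0 (z + (4 * m + 4)) - g0 (z + (4 * m + 5))‖ := by
        rw [Pc, norm_mul, u_norm_c, one_mul]
    _ ≤ 2 / (2 * ((m : ℝ) + 1)) ^ 2 := key
    _ ≤ bnd m := by
        rw [bnd, inv_pow]
        rw [div_le_iff₀ (by positivity), inv_mul_eq_div, le_div_iff₀ (by positivity)]
        nlinarith [hm]

def sC : Set ℂ := {z : ℂ | -2 < z.re}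

lemma isOpen_sC : IsOpen sC := isOpen_lt continuous_const Complex.continuous_re

noncomputable def Tc (z : ℂ) : ℂ := ∑' m, Pc m z

lemma Pc_differentiableAt {m : ℕ} {z : ℂ} (hz : -2 < z.re) :
    DifferentiableAt ℂ (Pc m) z := by
  have hm : (0:ℝ) ≤ m := Nat.cast_nonneg m
  have h1 : ∀ c : ℝ, 2 ≤ c → DifferentiableAt ℂ (fun w : ℂ => Complex.log (w + (c:ℂ))) z := by
    intro c hc
    have : (0:ℝ) < (z + (c:ℂ)).re := by simp [Complex.add_re]; linarith
    exact (Complex.differentiableAt_log (slit_of_re this)).comp z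
      (differentiableAt_id.add_const _)
  have h2 : ∀ c : ℝ, 2 ≤ c → DifferentiableAt ℂ (fun w : ℂ => g0 (w + (c:ℂ))) z := by
    intro c hc
    have ha := h1 c hc
    have hb := h1 (c + 2) (by linarith)
    have heq : (fun w : ℂ => g0 (w + (c:ℂ))) =
        fun w : ℂ => Complex.log (w + (c:ℂ)) - Complex.log (w + ((c:ℝ) + 2 : ℝ)) := by
      funext w; rw [g0]; push_cast; ring_nf
    rw [heq]
    exact ha.sub hb
  have ha := h2 (4 * m + 4) (by linarith)
  have hb := h2 (4 * m + 5) (by linarith)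
  have heq : Pc m = fun w : ℂ =>
      (u (m + 1) : ℂ) * (g0 (w + ((4 * (m:ℝ) + 4 : ℝ) : ℂ)) - g0 (w + ((4 * (m:ℝ) + 5 : ℝ) : ℂ))) := by
    funext w; rw [Pc]; norm_num
  rw [heq]
  exact (ha.sub hb).const_mul _

lemma Tc_differentiableOn : DifferentiableOn ℂ Tc sC := by
  have h1 : TendstoUniformlyOn (fun N : ℕ => fun z => ∑ m ∈ Finset.range N, Pc m z)
      (fun z => ∑' m, Pc m z) atTop sC :=
    tendstoUniformlyOn_tsum_nat summable_bnd (fun m z hz => norm_Pc hz)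
  have h2 : ∀ᶠ N : ℕ in atTop,
      DifferentiableOn ℂ (fun z => ∑ m ∈ Finset.range N, Pc m z) sC := by
    filter_upwards with N
    intro z hz
    exact (DifferentiableAt.fun_sum fun m _ => Pc_differentiableAt hz).differentiableWithinAt
  exact h1.tendstoLocallyUniformlyOn.differentiableOn h2 isOpen_sC

noncomputable def Hc (z : ℂ) : ℂ := (3 + z) / (2 + z) * Complex.exp (Tc z)

lemma Hc_differentiableOn : DifferentiableOn ℂ Hc sC := by
  have h1 : DifferentiableOn ℂ (fun z : ℂ => (3 + z) / (2 + z)) sC := by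
    apply DifferentiableOn.div
    · exact (differentiable_const _).differentiableOn.add differentiable_id.differentiableOn
    · exact (differentiable_const _).differentiableOn.add differentiable_id.differentiableOn
    · intro z hz
      intro h
      have : (2 + z).re = 0 := by rw [h]; simp
      simp [Complex.add_re] at this
      have hz' : -2 < z.re := hz
      linarith
  exact h1.mul (Complex.differentiable_exp.comp_differentiableOn Tc_differentiableOn)

lemma Hc_analytic : AnalyticOnNhd ℂ Hc sC := Hc_differentiableOn.analyticOnNhd isOpen_sC

lemma hre_contDiffOn : ContDiffOn ℝ (⊤ : ℕ∞) (fun x : ℝ => (Hc (x : ℂ)).re) (Set.Ioi (-2 : ℝ)) := by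
  have A2 : AnalyticOnNhd ℝ Hc sC := Hc_analytic.restrictScalars
  have Aof : AnalyticOnNhd ℝ (fun x : ℝ => (x : ℂ)) (Set.Ioi (-2 : ℝ)) := fun x _ =>
    Complex.ofRealCLM.analyticAt x
  have B1 : AnalyticOnNhd ℝ (fun x : ℝ => Hc (x : ℂ)) (Set.Ioi (-2 : ℝ)) :=
    A2.comp Aof (fun x hx => by simpa [sC] using hx)
  have B2 : AnalyticOnNhd ℝ (fun x : ℝ => (Hc (x : ℂ)).re) (Set.Ioi (-2 : ℝ)) := by
    have Are : AnalyticOnNhd ℝ (fun z : ℂ => z.re) (Set.univ : Set ℂ) := fun z _ =>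
      Complex.reCLM.analyticAt z
    exact Are.comp B1 (fun x _ => Set.mem_univ _)
  exact B2.contDiffOn (uniqueDiffOn_Ioi _)

noncomputable def P0 (m : ℕ) (x : ℝ) : ℝ :=
  (u (m + 1) : ℝ) * (Real.log (x + (4 * m + 4)) - Real.log (x + (4 * m + 5))
    - Real.log (x + (4 * m + 6)) + Real.log (x + (4 * m + 7)))

lemma Pc_ofReal {m : ℕ} {x : ℝ} (hx : -2 < x) : Pc m (x : ℂ) = ((P0 m x : ℝ) : ℂ) := by
  have hm : (0:ℝ) ≤ m := Nat.cast_nonneg m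
  have p4 : (0:ℝ) ≤ x + (4 * m + 4) := by linarith
  have p5 : (0:ℝ) ≤ x + (4 * m + 5) := by linarith
  have p6 : (0:ℝ) ≤ x + (4 * m + 6) := by linarith
  have p7 : (0:ℝ) ≤ x + (4 * m + 7) := by linarith
  rw [Pc, g0, g0]
  have e4 : ((x:ℂ) + (4 * m + 4)) = ((x + (4 * m + 4) : ℝ) : ℂ) := by push_cast; ring
  have e6 : ((x:ℂ) + (4 * m + 4)) + 2 = ((x + (4 * m + 6) : ℝ) : ℂ) := by push_cast; ring
  have e5 : ((x:ℂ) + (4 * m + 5)) = ((x + (4 * m + 5) : ℝ) : ℂ) := by push_cast; ring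
  have e7 : ((x:ℂ) + (4 * m + 5)) + 2 = ((x + (4 * m + 7) : ℝ) : ℂ) := by push_cast; ring
  rw [e6, e7, e4, e5, ← Complex.ofReal_log p4, ← Complex.ofReal_log p6,
    ← Complex.ofReal_log p5, ← Complex.ofReal_log p7, P0]
  push_cast
  ring

lemma P0_abs {m : ℕ} {x : ℝ} (hx : -2 < x) : |P0 m x| ≤ bnd m := by
  have h := norm_Pc (m := m) (z := (x : ℂ)) (by simpa using hx)
  rw [Pc_ofReal hx, Complex.norm_real, Real.norm_eq_abs] at h
  exact h

lemma summable_P0 {x : ℝ} (hx : -2 < x) : Summable (fun m => P0 m x) :=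
  Summable.of_norm_bounded summable_bnd
    (fun m => by rw [Real.norm_eq_abs]; exact P0_abs hx)

lemma Tc_ofReal {x : ℝ} (hx : -2 < x) : Tc (x : ℂ) = ((∑' m, P0 m x : ℝ) : ℂ) := by
  rw [Tc]
  have h1 : ∀ m : ℕ, Pc m (x : ℂ) = ((P0 m x : ℝ) : ℂ) := fun m => Pc_ofReal hx
  rw [tsum_congr h1]
  exact (Complex.ofRealCLM.map_tsum (summable_P0 hx)).symm

lemma Hc_re_ofReal {x : ℝ} (hx : -2 < x) :
    (Hc (x : ℂ)).re = (3 + x) / (2 + x) * Real.exp (∑' m, P0 m x) := by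
  rw [Hc, Tc_ofReal hx, ← Complex.ofReal_exp]
  have e1 : ((3:ℂ) + (x:ℂ)) / (2 + (x:ℂ)) = (((3 + x) / (2 + x) : ℝ) : ℂ) := by push_cast; ring
  rw [e1, ← Complex.ofReal_mul, Complex.ofReal_re]

/-- If `h x` is, for `x > -2`, the (positive) limit of the partial products
`∏_{n=1}^{N} ((2n+x)/(2n+1+x))^{u_n}`, then `h` is infinitely differentiable
on the open interval `(-2, ∞)`. -/
theorem stmt_12 (h : ℝ → ℝ)
    (hh : ∀ x : ℝ, -2 < x →
      Tendsto (fun N : ℕ => ∏ n ∈ Finset.Icc 1 N,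
        ((2 * (n : ℝ) + x) / (2 * (n : ℝ) + 1 + x)) ^ (u n)) atTop (𝓝 (h x)))
    (hpos : ∀ x : ℝ, -2 < x → 0 < h x) :
    ContDiffOn ℝ (⊤ : ℕ∞) h (Set.Ioi (-2 : ℝ)) := by
  apply hre_contDiffOn.congr
  intro x hx
  rw [Set.mem_Ioi] at hx
  set F : ℕ → ℝ := fun n => ((2 * (n : ℝ) + x) / (2 * (n : ℝ) + 1 + x)) ^ (u n) with hFdef
  have hb1 : ∀ n : ℕ, 1 ≤ n → (0:ℝ) < 2 * (n : ℝ) + x := by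
    intro n hn
    have : (1:ℝ) ≤ (n : ℝ) := by exact_mod_cast hn
    linarith
  have hb2 : ∀ n : ℕ, 1 ≤ n → (0:ℝ) < 2 * (n : ℝ) + 1 + x := by
    intro n hn
    have : (1:ℝ) ≤ (n : ℝ) := by exact_mod_cast hn
    linarith
  have hF_pos : ∀ n : ℕ, 1 ≤ n → 0 < F n := fun n hn =>
    zpow_pos (div_pos (hb1 n hn) (hb2 n hn)) _
  -- pairing identity for products
  have prod_pair : ∀ M : ℕ, ∏ n ∈ Finset.Icc 1 (2 * M + 1), F n
      = F 1 * ∏ m ∈ Finset.range M, (F (2 * m + 2) * F (2 * m + 3)) := by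
    intro M
    induction M with
    | zero => simp
    | succ M ih =>
      have e1 : 2 * (M + 1) + 1 = (2 * M + 1) + 1 + 1 := by ring
      rw [e1, Finset.prod_Icc_succ_top (by omega), Finset.prod_Icc_succ_top (by omega), ih,
        Finset.prod_range_succ]
      have e2 : 2 * M + 1 + 1 = 2 * M + 2 := by ring
      have e3 : 2 * M + 1 + 1 + 1 = 2 * M + 3 := by ring
      rw [e2, e3]
      ring
  -- logarithm of each pair
  have log_pair : ∀ m : ℕ, Real.log (F (2 * m + 2) * F (2 * m + 3)) = P0 m x := by
    intro m
    have hm : (0:ℝ) ≤ m := Nat.cast_nonneg m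
    have e1 : 2 * ((2 * m + 2 : ℕ) : ℝ) + x = x + (4 * m + 4) := by push_cast; ring
    have e2 : 2 * ((2 * m + 2 : ℕ) : ℝ) + 1 + x = x + (4 * m + 5) := by push_cast; ring
    have e3 : 2 * ((2 * m + 3 : ℕ) : ℝ) + x = x + (4 * m + 6) := by push_cast; ring
    have e4 : 2 * ((2 * m + 3 : ℕ) : ℝ) + 1 + x = x + (4 * m + 7) := by push_cast; ring
    have p4 : (0:ℝ) < x + (4 * m + 4) := by linarith
    have p5 : (0:ℝ) < x + (4 * m + 5) := by linarith
    have p6 : (0:ℝ) < x + (4 * m + 6) := by linarith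
    have p7 : (0:ℝ) < x + (4 * m + 7) := by linarith
    have hu2 : u (2 * m + 2) = u (m + 1) := u_even m
    have hu3 : u (2 * m + 3) = - u (m + 1) := u_odd m
    rcases u_cases (m + 1) with h1 | h1
    · simp only [hFdef]
      rw [e1, e2, e3, e4, hu2, hu3, h1]
      norm_num
      rw [Real.log_mul (by positivity) (by positivity),
        Real.log_div (ne_of_gt p4) (ne_of_gt p5), Real.log_div (ne_of_gt p7) (ne_of_gt p6),
        P0, h1]
      push_cast
      ring
    · simp only [hFdef]
      rw [e1, e2, e3, e4, hu2, hu3, h1]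
      norm_num
      rw [Real.log_mul (by positivity) (by positivity),
        Real.log_div (ne_of_gt p5) (ne_of_gt p4), Real.log_div (ne_of_gt p6) (ne_of_gt p7),
        P0, h1]
      push_cast
      ring
  -- logarithm of partial products
  have pair_pos : ∀ m : ℕ, 0 < F (2 * m + 2) * F (2 * m + 3) := fun m =>
    mul_pos (hF_pos _ (by omega)) (hF_pos _ (by omega))
  have logprod : ∀ M : ℕ, Real.log (∏ n ∈ Finset.Icc 1 (2 * M + 1), F n)
      = Real.log (F 1) + ∑ m ∈ Finset.range M, P0 m x := by
    intro M
    rw [prod_pair M,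
      Real.log_mul (ne_of_gt (hF_pos 1 le_rfl))
        (ne_of_gt (Finset.prod_pos fun m _ => pair_pos m)),
      Real.log_prod (fun m _ => ne_of_gt (pair_pos m))]
    congr 1
    exact Finset.sum_congr rfl fun m _ => log_pair m
  -- limits
  have hmono : Tendsto (fun M : ℕ => 2 * M + 1) atTop atTop :=
    tendsto_atTop_atTop.mpr fun b => ⟨b, fun a ha => by omega⟩
  have hodd : Tendsto (fun M : ℕ => ∏ n ∈ Finset.Icc 1 (2 * M + 1), F n) atTop (𝓝 (h x)) :=
    (hh x hx).comp hmono
  have hlog1 : Tendsto (fun M : ℕ => Real.log (∏ n ∈ Finset.Icc 1 (2 * M + 1), F n)) atTop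
      (𝓝 (Real.log (h x))) :=
    ((Real.continuousAt_log (hpos x hx).ne').tendsto).comp hodd
  have hlog1' : Tendsto (fun M : ℕ => Real.log (F 1) + ∑ m ∈ Finset.range M, P0 m x) atTop
      (𝓝 (Real.log (h x))) := hlog1.congr logprod
  have hlog2 : Tendsto (fun M : ℕ => Real.log (F 1) + ∑ m ∈ Finset.range M, P0 m x) atTop
      (𝓝 (Real.log (F 1) + ∑' m, P0 m x)) :=
    tendsto_const_nhds.add (summable_P0 hx).hasSum.tendsto_sum_nat
  have hkey : Real.log (h x) = Real.log (F 1) + ∑' m, P0 m x :=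
    tendsto_nhds_unique hlog1' hlog2
  have hF1 : F 1 = (3 + x) / (2 + x) := by
    simp only [hFdef]
    rw [u_one]
    push_cast
    rw [zpow_neg_one, inv_div]
    ring_nf
  have final : h x = (3 + x) / (2 + x) * Real.exp (∑' m, P0 m x) := by
    have h1 : h x = Real.exp (Real.log (h x)) := (Real.exp_log (hpos x hx)).symm
    rw [h1, hkey, Real.exp_add, Real.exp_log (hF_pos 1 le_rfl), hF1]
  rw [final, Hc_re_ofReal hx]
end
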